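/- Let d ≥ 2 be an integer, b > 1 a real number, t ∈ (0,1), and λ = e^{iπt}. Let γ(z) = (z+b)/(bz+1) and f_λ(z) = λ·γ(z)^d. Then for z ∈ S¹: f_λ(z) ∈ Arc(1, λ) if and only if there exists m ∈ {0, 1, …, d−1} such that γ(z) ∈ Arc(e^{iπ(2m−t)/d}, e^{iπ·2m/d}). In other words, the preimage f_λ^{−1}(Arc(1,λ)) ∩ S¹ is the disjoint union over m = 0,…,d−1 of the arcs γ^{−1}(Arc(e^{iπ(2m−t)/d}, e^{iπ·2m/d})). -/

import Mathlib

/-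
Write `w = γ(z)` and parametrise `Arc(1, λ)` by the angle `s ∈ (0, πt)`, so that
`λ w^d ∈ Arc(1, λ)` means `w^d = e^{i(s - πt)}` for such an `s`. The `d`-th roots of
`e^{i(s - πt)}` are `ζ^m e^{i(s - πt)/d}` with `ζ = e^{2πi/d}` and `m < d`, and as `s` runs over
`(0, πt)` the `m`-th of them sweeps exactly `Arc(e^{iπ(2m - t)/d}, e^{iπ·2m/d})`. These arcs are
disjoint because `s` is recovered from `w` as the angle of `λ w^d`, and then `ζ^m` from `w`.
-/

open Complex

/-- The Möbius map `γ(z) = (z+b)/(bz+1)`. -/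
noncomputable def gammaM (b : ℝ) (z : ℂ) : ℂ :=
  (z + (b : ℂ)) / ((b : ℂ) * z + 1)

/-- The Ising recursion map `f_λ(z) = λ·γ(z)^d`. -/
noncomputable def fIsing (d : ℕ) (b : ℝ) (lam z : ℂ) : ℂ :=
  lam * (gammaM b z) ^ d

/-- The angle in `[0, 2π)` of the counterclockwise arc from `α` to `β` on the unit circle. -/
noncomputable def arcAngle (α β : ℂ) : ℝ :=
  if (β / α).arg < 0 then (β / α).arg + 2 * Real.pi else (β / α).arg

/-- The open counterclockwise circular arc from `α` to `β`. -/
def openArc (α β : ℂ) : Set ℂ :=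
  {z | ∃ t : ℝ, 0 < t ∧ t < arcAngle α β ∧ z = α * Complex.exp (t * Complex.I)}

open Set
open scoped Real

lemma arcAngle_exp_mul_I {a b : ℝ} (hab : a ≤ b) (hba : b < a + 2 * π) :
    arcAngle (exp (a * I)) (exp (b * I)) = b - a := by
  have hquot : exp (b * I) / exp (a * I) = exp ((b - a : ℝ) * I) := by
    rw [← exp_sub]; push_cast; ring_nf
  rw [arcAngle, hquot, arg_exp_mul_I]
  rcases le_or_gt (b - a) π with hπ | hπ
  · rw [(toIocMod_eq_self _).2 ⟨by linarith, by linarith⟩, if_neg (by linarith)]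
  · have hmod : toIocMod Real.two_pi_pos (-π) (b - a) = b - a - 2 * π :=
      (toIocMod_eq_iff _).2 ⟨⟨by linarith, by linarith⟩, 1, by rw [one_smul]; ring⟩
    rw [hmod, if_pos (by linarith)]
    ring

lemma mem_openArc_exp_mul_I_iff {a b : ℝ} (hab : a ≤ b) (hba : b < a + 2 * π) {z : ℂ} :
    z ∈ openArc (exp (a * I)) (exp (b * I)) ↔
      ∃ s : ℝ, 0 < s ∧ s < b - a ∧ z = exp (a * I) * exp (s * I) := by
  simp only [openArc, mem_ofPred_eq, arcAngle_exp_mul_I hab hba]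

lemma mem_openArc_one_iff {θ : ℝ} (hθ₀ : 0 ≤ θ) (hθ : θ < 2 * π) {z : ℂ} :
    z ∈ openArc 1 (exp (θ * I)) ↔ ∃ s : ℝ, 0 < s ∧ s < θ ∧ z = exp (s * I) := by
  simpa using mem_openArc_exp_mul_I_iff (a := 0) (b := θ) hθ₀ (by simpa using hθ) (z := z)

lemma exp_mul_I_injOn_Ico : InjOn (fun s : ℝ ↦ exp (s * I)) (Ico 0 (2 * π)) := by
  intro s hs s' hs' h
  exact Circle.exp_injOn_Ico (by simp) hs hs' (Subtype.ext (by simpa [Circle.coe_exp] using h))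

lemma exists_eq_exp_pow_mul_of_pow_eq {d : ℕ} (hd : d ≠ 0) {w u : ℂ} (hu : u ≠ 0)
    (h : w ^ d = u ^ d) : ∃ m < d, w = exp (2 * π * I / d) ^ m * u := by
  have : NeZero d := ⟨hd⟩
  obtain ⟨m, hm, hζ⟩ := (isPrimitiveRoot_exp d hd).eq_pow_of_pow_eq_one
    (ξ := w / u) (by rw [div_pow, h, div_self (pow_ne_zero d hu)])
  exact ⟨m, hm, by rw [hζ, div_mul_cancel₀ w hu]⟩

section PowerMap

variable {d : ℕ} {t : ℝ}

def rootArc (d : ℕ) (t : ℝ) (m : ℕ) : Set ℂ :=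
  openArc (exp ((π * (2 * (m : ℝ) - t) / d : ℝ) * I)) (exp ((π * (2 * (m : ℝ)) / d : ℝ) * I))

lemma mem_rootArc_iff (hd : d ≠ 0) (ht₀ : 0 ≤ t) (ht : t < 2) {m : ℕ} {w : ℂ} :
    w ∈ rootArc d t m ↔ ∃ s : ℝ, 0 < s ∧ s < π * t ∧
      w = exp (2 * π * I / d) ^ m * exp (((s - π * t) / d : ℝ) * I) := by
  have hd₀ : (0 : ℝ) < d := by positivity
  have hd₁ : (1 : ℝ) ≤ d := by exact_mod_cast Nat.one_le_iff_ne_zero.2 hd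
  have hlen : π * (2 * m) / d - π * (2 * m - t) / d = π * t / d := by ring
  have hexp : ∀ s : ℝ, exp ((π * (2 * (m : ℝ) - t) / d : ℝ) * I) * exp ((s / d : ℝ) * I) =
      exp (2 * π * I / d) ^ m * exp (((s - π * t) / d : ℝ) * I) := by
    intro s
    rw [← exp_nat_mul, ← exp_add, ← exp_add]
    congr 1
    push_cast
    field_simp
    ring
  rw [rootArc, mem_openArc_exp_mul_I_iff (by rw [← sub_nonneg, hlen]; positivity)
    (by rw [← sub_lt_iff_lt_add', hlen, div_lt_iff₀ hd₀]; nlinarith [Real.pi_pos]), hlen]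
  constructor
  · rintro ⟨s, hs₀, hs, rfl⟩
    refine ⟨d * s, by positivity, by rwa [lt_div_iff₀' hd₀] at hs, ?_⟩
    rw [← hexp, mul_div_cancel_left₀ s hd₀.ne']
  · rintro ⟨s, hs₀, hs, rfl⟩
    exact ⟨s / d, by positivity, div_lt_div_of_pos_right hs hd₀, (hexp s).symm⟩

lemma exp_mul_pow_exp_pow_mul_exp (hd : d ≠ 0) (m : ℕ) (s : ℝ) :
    exp ((π * t : ℝ) * I) * (exp (2 * π * I / d) ^ m * exp (((s - π * t) / d : ℝ) * I)) ^ d =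
      exp (s * I) := by
  rw [mul_pow, ← pow_mul, mul_comm m, pow_mul, (isPrimitiveRoot_exp d hd).pow_eq_one, one_pow,
    one_mul, ← exp_nat_mul, ← exp_add]
  congr 1
  push_cast
  field_simp
  ring

theorem exp_mul_pow_mem_openArc_iff (hd : d ≠ 0) (ht₀ : 0 ≤ t) (ht : t < 2) (w : ℂ) :
    exp ((π * t : ℝ) * I) * w ^ d ∈ openArc 1 (exp ((π * t : ℝ) * I)) ↔
      ∃ m < d, w ∈ rootArc d t m := by
  have hπt : π * t < 2 * π := by nlinarith [Real.pi_pos]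
  simp only [mem_openArc_one_iff (by positivity) hπt, mem_rootArc_iff hd ht₀ ht]
  constructor
  · rintro ⟨s, hs₀, hs, hw⟩
    have hpow : w ^ d = exp (((s - π * t) / d : ℝ) * I) ^ d := by
      refine mul_left_cancel₀ (exp_ne_zero ((π * t : ℝ) * I)) ?_
      rw [hw, ← exp_mul_pow_exp_pow_mul_exp hd 0 s, pow_zero, one_mul]
    obtain ⟨m, hm, rfl⟩ := exists_eq_exp_pow_mul_of_pow_eq hd (exp_ne_zero _) hpow
    exact ⟨m, hm, s, hs₀, hs, rfl⟩
  · rintro ⟨m, -, s, hs₀, hs, rfl⟩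
    exact ⟨s, hs₀, hs, exp_mul_pow_exp_pow_mul_exp hd m s⟩

theorem rootArc_disjoint (hd : d ≠ 0) (ht₀ : 0 ≤ t) (ht : t < 2) {m₁ m₂ : ℕ}
    (h₁ : m₁ < d) (h₂ : m₂ < d) (hne : m₁ ≠ m₂) : Disjoint (rootArc d t m₁) (rootArc d t m₂) := by
  have hπt : π * t < 2 * π := by nlinarith [Real.pi_pos]
  rw [disjoint_left]
  intro w hw₁ hw₂
  obtain ⟨s₁, hs₁₀, hs₁, rfl⟩ := (mem_rootArc_iff hd ht₀ ht).1 hw₁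
  obtain ⟨s₂, hs₂₀, hs₂, hw⟩ := (mem_rootArc_iff hd ht₀ ht).1 hw₂
  have hs : s₁ = s₂ := by
    refine exp_mul_I_injOn_Ico ⟨hs₁₀.le, by linarith⟩ ⟨hs₂₀.le, by linarith⟩ ?_
    dsimp only
    rw [← exp_mul_pow_exp_pow_mul_exp hd m₁ s₁, hw, exp_mul_pow_exp_pow_mul_exp hd m₂ s₂]
  subst hs
  exact hne <| (isPrimitiveRoot_exp d hd).pow_inj h₁ h₂ (mul_right_cancel₀ (exp_ne_zero _) hw)

end PowerMap

theorem stmt18_general (d : ℕ) (hd : 2 ≤ d) (b : ℝ)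
    (t : ℝ) (ht0 : 0 < t) (ht1 : t < 1) (lam : ℂ)
    (hlam : lam = Complex.exp ((Real.pi * t : ℝ) * Complex.I)) :
    (∀ z ∈ Metric.sphere (0 : ℂ) 1,
      (fIsing d b lam z ∈ openArc 1 lam ↔
        ∃ m : ℕ, m < d ∧ gammaM b z ∈
          openArc (Complex.exp ((Real.pi * (2 * (m : ℝ) - t) / (d : ℝ) : ℝ) * Complex.I))
            (Complex.exp ((Real.pi * (2 * (m : ℝ)) / (d : ℝ) : ℝ) * Complex.I)))) ∧
    (∀ m₁ m₂ : ℕ, m₁ < d → m₂ < d → m₁ ≠ m₂ →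
      Disjoint
        (openArc (Complex.exp ((Real.pi * (2 * (m₁ : ℝ) - t) / (d : ℝ) : ℝ) * Complex.I))
          (Complex.exp ((Real.pi * (2 * (m₁ : ℝ)) / (d : ℝ) : ℝ) * Complex.I)))
        (openArc (Complex.exp ((Real.pi * (2 * (m₂ : ℝ) - t) / (d : ℝ) : ℝ) * Complex.I))
          (Complex.exp ((Real.pi * (2 * (m₂ : ℝ)) / (d : ℝ) : ℝ) * Complex.I)))) := by
  have hd₀ : d ≠ 0 := by omega
  have ht₂ : t < 2 := by linarith
  subst hlam
  exact ⟨fun z _ ↦ exp_mul_pow_mem_openArc_iff hd₀ ht0.le ht₂ (gammaM b z),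
    fun m₁ m₂ h₁ h₂ hne ↦ rootArc_disjoint hd₀ ht0.le ht₂ h₁ h₂ hne⟩

/-- Let `d ≥ 2`, `b > 1`, `t ∈ (0,1)` and `λ = e^{iπt}`.  For `z ∈ S¹` one has
`f_λ(z) ∈ Arc(1,λ)` iff `γ(z)` lies in one of the `d` arcs
`Arc(e^{iπ(2m−t)/d}, e^{iπ·2m/d})`, `m = 0,…,d−1`; and these arcs are pairwise
disjoint, so `f_λ^{−1}(Arc(1,λ)) ∩ S¹` is their disjoint union under `γ^{−1}`. -/
theorem stmt18 (d : ℕ) (hd : 2 ≤ d) (b : ℝ) (hb : 1 < b)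
    (t : ℝ) (ht0 : 0 < t) (ht1 : t < 1) (lam : ℂ)
    (hlam : lam = Complex.exp ((Real.pi * t : ℝ) * Complex.I)) :
    (∀ z ∈ Metric.sphere (0 : ℂ) 1,
      (fIsing d b lam z ∈ openArc 1 lam ↔
        ∃ m : ℕ, m < d ∧ gammaM b z ∈
          openArc (Complex.exp ((Real.pi * (2 * (m : ℝ) - t) / (d : ℝ) : ℝ) * Complex.I))
            (Complex.exp ((Real.pi * (2 * (m : ℝ)) / (d : ℝ) : ℝ) * Complex.I)))) ∧
    (∀ m₁ m₂ : ℕ, m₁ < d → m₂ < d → m₁ ≠ m₂ →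
      Disjoint
        (openArc (Complex.exp ((Real.pi * (2 * (m₁ : ℝ) - t) / (d : ℝ) : ℝ) * Complex.I))
          (Complex.exp ((Real.pi * (2 * (m₁ : ℝ)) / (d : ℝ) : ℝ) * Complex.I)))
        (openArc (Complex.exp ((Real.pi * (2 * (m₂ : ℝ) - t) / (d : ℝ) : ℝ) * Complex.I))
          (Complex.exp ((Real.pi * (2 * (m₂ : ℝ)) / (d : ℝ) : ℝ) * Complex.I)))) :=
  stmt18_general d hd b t ht0 ht1 lam hlam
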